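/- Let G be a graph on n vertices with a non-trivial minimum cut (S, V∖S) (both sides of size ≥ 2), and suppose a star contraction is performed where every non-center vertex v is contracted to a center r(v) ∈ N_G(v). If for every contracted vertex v the chosen center r(v) lies on the same side of the cut as v, then the cut (S, V∖S) survives the contraction and λ_{G'} = λ_G. -/
import Mathlib


open scoped Classical

/-- The number of edges of the multigraph with edge multiset `E` crossing the cut `(S, Sᶜ)`. -/
noncomputable def cutVal {V : Type*} (E : Multiset (V × V)) (S : Set V) : ℕ :=
  (E.filter (fun e => (e.1 ∈ S ∧ e.2 ∉ S) ∨ (e.1 ∉ S ∧ e.2 ∈ S))).card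

/-- The edge connectivity of a multigraph: the minimum cut value over nonempty proper
vertex subsets. -/
noncomputable def edgeConn {V : Type*} (E : Multiset (V × V)) : ℕ :=
  sInf {k | ∃ S : Set V, S.Nonempty ∧ Sᶜ.Nonempty ∧ cutVal E S = k}

/-- if `G` has a non-trivial minimum cut `(S, Sᶜ)` and a star contraction
(contracting each non-center `v ∉ R` to a chosen neighboring center `r v ∈ R`) is such
that every contracted vertex is sent to a center on its own side of the cut, then the cut
survives the contraction and `λ_{G'} = λ_G`. -/
theorem stmt_18
    {V : Type*} [Fintype V] (E : Multiset (V × V))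
    (S : Set V) (hS : S.Nonempty) (hSc : Sᶜ.Nonempty)
    (hmin : cutVal E S = edgeConn E)
    (hnontriv : 2 ≤ S.ncard ∧ 2 ≤ Sᶜ.ncard)
    (R : Set V) (r : V → V)
    (hr : ∀ v ∉ R, r v ∈ R ∧ ((v, r v) ∈ E ∨ (r v, v) ∈ E))
    (hside : ∀ v ∉ R, (v ∈ S ↔ r v ∈ S)) :
    ∀ c : V → ↥R, (∀ v (h : v ∈ R), (c v : V) = v) → (∀ v ∉ R, (c v : V) = r v) →
      edgeConn ((E.map (fun e => (c e.1, c e.2))).filter (fun e => e.1 ≠ e.2)) =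
        edgeConn E := by
  intro c hcR hcr
  have hside' : ∀ v, ((c v : V) ∈ S ↔ v ∈ S) := by
    intro v
    by_cases hv : v ∈ R
    · rw [hcR v hv]
    · rw [hcr v hv]; exact (hside v hv).symm
  set E' : Multiset (↥R × ↥R) :=
    (E.map (fun e => (c e.1, c e.2))).filter (fun e => e.1 ≠ e.2) with hE'
  have key : ∀ T : Set ↥R, cutVal E' T = cutVal E ((fun v => c v) ⁻¹' T) := by
    intro T
    unfold cutVal
    rw [hE', Multiset.filter_filter, Multiset.filter_map, Multiset.card_map]
    congr 1
    apply Multiset.filter_congr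
    intro e _
    constructor
    · rintro ⟨h1, _⟩; exact h1
    · rintro h
      refine ⟨h, ?_⟩
      rcases h with ⟨h1, h2⟩ | ⟨h1, h2⟩
      · intro hc
        have hc' : c e.1 = c e.2 := hc
        exact h2 (show c e.2 ∈ T from hc' ▸ h1)
      · intro hc
        have hc' : c e.1 = c e.2 := hc
        exact h1 (show c e.1 ∈ T from hc'.symm ▸ h2)
  -- the surviving cut
  set S' : Set ↥R := {x | (x : V) ∈ S} with hS'
  have hpreS : (fun v => c v) ⁻¹' S' = S := by
    ext v; simp [hS', Set.preimage, hside' v]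
  obtain ⟨a, ha⟩ := hS
  obtain ⟨b, hb⟩ := hSc
  have hS'ne : S'.Nonempty := ⟨c a, (hside' a).mpr ha⟩
  have hS'cne : S'ᶜ.Nonempty := ⟨c b, fun h => hb ((hside' b).mp h)⟩
  have le1 : edgeConn E' ≤ edgeConn E := by
    rw [← hmin]
    apply Nat.sInf_le
    exact ⟨S', hS'ne, hS'cne, by rw [key, hpreS]⟩
  have le2 : edgeConn E ≤ edgeConn E' := by
    refine le_csInf ⟨cutVal E' S', S', hS'ne, hS'cne, rfl⟩ ?_
    rintro k ⟨T, hT, hTc, rfl⟩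
    apply Nat.sInf_le
    obtain ⟨x, hx⟩ := hT
    obtain ⟨y, hy⟩ := hTc
    refine ⟨(fun v => c v) ⁻¹' T, ⟨x, ?_⟩, ⟨y, ?_⟩, (key T).symm⟩
    · show c (x : V) ∈ T
      have : c (x : V) = x := Subtype.ext (hcR x x.2)
      rwa [this]
    · show c (y : V) ∈ T → False
      have : c (y : V) = y := Subtype.ext (hcR y y.2)
      rw [this]; exact hy
  exact le_antisymm le1 le2
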